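/- Let p be an odd prime and m ≥ 1 an integer. Then the independent domination polynomial D_i(Γ(ℤ_{p^m}), x) = (p^m − p^{m−1})·x + x^{p^{m−1}}, regarded as a polynomial over ℝ, has exactly one real root, namely x = 0. -/

import Mathlib

open Polynomial

/-- The comaximal graph of `ℤ/nℤ`: distinct `a, b` are adjacent iff the ideal
generated by `a` and `b` is the whole ring. -/
def comaximalGraph (n : ℕ) : SimpleGraph (ZMod n) where
  Adj a b := a ≠ b ∧ Ideal.span ({a, b} : Set (ZMod n)) = ⊤
  symm := by
    constructor
    rintro a b ⟨hab, h⟩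
    refine ⟨hab.symm, ?_⟩
    rwa [Set.pair_comm]
  loopless := by
    constructor
    rintro a ⟨h, -⟩
    exact h rfl

/-- `S` is an independent dominating set of `G`. -/
def IsIndepDomSet {V : Type*} (G : SimpleGraph V) (S : Finset V) : Prop :=
  (∀ a ∈ S, ∀ b ∈ S, ¬ G.Adj a b) ∧ ∀ v : V, v ∉ S → ∃ u ∈ S, G.Adj u v

/-- The independent domination polynomial `D_i(G, x) = Σ_k d_i(G,k) x^k`. -/
noncomputable def indepDomPoly {V : Type*} (G : SimpleGraph V) : Polynomial ℝ :=
  ∑ k ∈ Finset.range (Nat.card V + 1),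
    Polynomial.C ((Nat.card {S : Finset V // IsIndepDomSet G S ∧ S.card = k}) : ℝ) *
      Polynomial.X ^ k

/-- The independence polynomial `I(G, x) = Σ_k c_k x^k`. -/
noncomputable def indepPoly {V : Type*} (G : SimpleGraph V) : Polynomial ℝ :=
  ∑ k ∈ Finset.range (Nat.card V + 1),
    Polynomial.C ((Nat.card {S : Finset V //
        (∀ a ∈ S, ∀ b ∈ S, ¬ G.Adj a b) ∧ S.card = k}) : ℝ) *
      Polynomial.X ^ k

/-! In the local ring `ℤ/p^mℤ` two elements generate the unit ideal iff one of them is a unit,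
so every unit is adjacent to every other vertex while the non-units form an independent set.
Hence the independent dominating sets are the `φ(p^m)` singletons of units and the set of the
`p^(m-1)` non-units, giving `D_i = φ(p^m)·x + x^(p^(m-1))`. Factoring out `x`, the cofactor is a
positive constant plus an even power of `x` because `p^(m-1)` is odd, so `0` is the only root. -/

open Finset

open scoped Classical in
theorem indepDomPoly_eq_sum {V : Type*} [Fintype V] (G : SimpleGraph V) :
    indepDomPoly G = ∑ S with IsIndepDomSet G S, (X : ℝ[X]) ^ #S := by
  have hcard (S : Finset V) : #S ∈ range (Nat.card V + 1) := by
    rw [mem_range, Nat.card_eq_fintype_card]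
    exact Nat.lt_succ_of_le (card_le_univ S)
  rw [indepDomPoly, ← sum_fiberwise_of_maps_to (fun S _ => hcard S)]
  refine sum_congr rfl fun k _ => ?_
  rw [sum_congr rfl fun S hS => by rw [(mem_filter.1 hS).2], sum_const, filter_filter,
    Nat.card_eq_fintype_card, Fintype.card_subtype, nsmul_eq_mul, C_eq_natCast]

theorem card_filter_isUnit {M : Type*} [Monoid M] [Fintype M] [Fintype Mˣ]
    [DecidablePred (IsUnit : M → Prop)] : #{a : M | IsUnit a} = Fintype.card Mˣ := by
  rw [← card_univ, ← card_map ⟨Units.val, Units.val_injective⟩]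
  congr 1
  ext a
  simp only [mem_filter, mem_univ, true_and, mem_map, Function.Embedding.coeFn_mk]
  rfl

theorem ZMod.isLocalRing_prime_pow {p m : ℕ} (hp : p.Prime) (hm : m ≠ 0) :
    IsLocalRing (ZMod (p ^ m)) := by
  have : Fact (1 < p ^ m) := ⟨Nat.one_lt_pow hm hp.one_lt⟩
  have hunit (a : ZMod (p ^ m)) : IsUnit a ↔ ¬ p ∣ a.val := by
    rw [← ZMod.isUnit_natCast_iff_not_dvd_pow hp (Nat.pos_of_ne_zero hm), ZMod.natCast_zmod_val]
  refine IsLocalRing.of_nonunits_add fun a b ha hb => ?_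
  rw [mem_nonunits_iff, hunit, not_not] at ha hb ⊢
  rw [ZMod.val_add, Nat.dvd_mod_iff (dvd_pow_self p hm)]
  exact dvd_add ha hb

theorem Nat.totient_prime_pow_add_prime_pow_pred {p m : ℕ} (hp : p.Prime) (hm : m ≠ 0) :
    (p ^ m).totient + p ^ (m - 1) = p ^ m := by
  obtain ⟨k, rfl⟩ := Nat.exists_eq_succ_of_ne_zero hm
  rw [Nat.totient_prime_pow_succ hp, Nat.succ_sub_one, pow_succ, ← Nat.mul_succ,
    Nat.succ_eq_add_one, Nat.sub_add_cancel hp.one_le]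

theorem mul_add_pow_eq_zero_iff {R : Type*} [CommRing R] [LinearOrder R] [IsStrictOrderedRing R]
    {a : R} (ha : 0 < a) {q : ℕ} (hq : Odd q) (x : R) : a * x + x ^ q = 0 ↔ x = 0 := by
  obtain ⟨k, rfl⟩ := hq
  have hfactor : a * x + x ^ (2 * k + 1) = x * (a + (x ^ k) ^ 2) := by ring
  rw [hfactor, mul_eq_zero, or_iff_left (add_pos_of_pos_of_nonneg ha (sq_nonneg _)).ne']

section ComaximalGraph

variable {n : ℕ} [IsLocalRing (ZMod n)]

theorem comaximalGraph_adj_iff {a b : ZMod n} :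
    (comaximalGraph n).Adj a b ↔ a ≠ b ∧ (IsUnit a ∨ IsUnit b) := by
  refine and_congr_right fun _ => ⟨fun h => ?_, ?_⟩
  · by_contra! hab
    have hle : Ideal.span {a, b} ≤ IsLocalRing.maximalIdeal (ZMod n) := by
      rw [Ideal.span_le, Set.insert_subset_iff, Set.singleton_subset_iff]
      exact hab
    exact (IsLocalRing.maximalIdeal.isMaximal _).ne_top (top_unique (h ▸ hle))
  · rintro (h | h) <;> exact Ideal.eq_top_of_isUnit_mem _ (Ideal.subset_span (by simp)) h

theorem isIndepDomSet_singleton_of_isUnit {u : ZMod n} (hu : IsUnit u) :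
    IsIndepDomSet (comaximalGraph n) {u} := by
  refine ⟨fun a ha b hb hab => ?_, fun v hv => ⟨u, mem_singleton_self u, ?_⟩⟩
  · rw [mem_singleton] at ha hb
    exact (comaximalGraph_adj_iff.1 hab).1 (ha.trans hb.symm)
  · exact comaximalGraph_adj_iff.2 ⟨Ne.symm (notMem_singleton.1 hv), .inl hu⟩

variable [NeZero n]

open scoped Classical in
theorem isIndepDomSet_nonunits :
    IsIndepDomSet (comaximalGraph n) ({a | ¬ IsUnit a} : Finset (ZMod n)) := by
  refine ⟨fun a ha b hb hab => ?_, fun v hv => ⟨0, by simp, ?_⟩⟩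
  · simp only [mem_filter, mem_univ, true_and] at ha hb
    exact (comaximalGraph_adj_iff.1 hab).2.elim ha hb
  · simp only [mem_filter, mem_univ, true_and, not_not] at hv
    exact comaximalGraph_adj_iff.2 ⟨fun h => not_isUnit_zero (h ▸ hv), .inr hv⟩

open scoped Classical in
theorem isIndepDomSet_comaximalGraph_iff {S : Finset (ZMod n)} :
    IsIndepDomSet (comaximalGraph n) S ↔
      (∃ u, IsUnit u ∧ S = {u}) ∨ S = ({a | ¬ IsUnit a} : Finset (ZMod n)) := by
  refine ⟨fun ⟨hind, hdom⟩ => ?_, ?_⟩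
  · by_cases hunit : ∃ u ∈ S, IsUnit u
    · obtain ⟨u, huS, hu⟩ := hunit
      refine .inl ⟨u, hu, eq_singleton_iff_unique_mem.2 ⟨huS, fun v hv => ?_⟩⟩
      by_contra hvu
      exact hind u huS v hv (comaximalGraph_adj_iff.2 ⟨Ne.symm hvu, .inl hu⟩)
    · push Not at hunit
      refine .inr (ext fun a => ⟨fun ha => by simpa using hunit a ha, fun ha => ?_⟩)
      by_contra haS
      obtain ⟨u, huS, hua⟩ := hdom a haS
      exact (comaximalGraph_adj_iff.1 hua).2.elim (hunit u huS) (by simpa using ha)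
  · rintro (⟨u, hu, rfl⟩ | rfl)
    · exact isIndepDomSet_singleton_of_isUnit hu
    · exact isIndepDomSet_nonunits

open scoped Classical in
theorem filter_isIndepDomSet_comaximalGraph :
    ({S | IsIndepDomSet (comaximalGraph n) S} : Finset (Finset (ZMod n))) =
      insert ({a | ¬ IsUnit a} : Finset (ZMod n))
        (({a | IsUnit a} : Finset _).image singleton) := by
  ext S
  simp only [mem_filter, mem_univ, true_and, mem_insert, mem_image,
    isIndepDomSet_comaximalGraph_iff]
  constructor
  · rintro (⟨u, hu, rfl⟩ | rfl)
    exacts [.inr ⟨u, hu, rfl⟩, .inl rfl]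
  · rintro (rfl | ⟨u, hu, rfl⟩)
    exacts [.inr rfl, .inl ⟨u, hu, rfl⟩]

open scoped Classical in
theorem indepDomPoly_comaximalGraph :
    indepDomPoly (comaximalGraph n) = C (n.totient : ℝ) * X + X ^ (n - n.totient) := by
  have hnonunits : ({a | ¬ IsUnit a} : Finset (ZMod n)) ∉
      ({a | IsUnit a} : Finset (ZMod n)).image singleton := by
    simp only [mem_image, mem_filter, mem_univ, true_and, not_exists, not_and]
    intro u hu hS
    have h0 : (0 : ZMod n) ∈ ({a | ¬ IsUnit a} : Finset (ZMod n)) := by simp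
    rw [← hS, mem_singleton] at h0
    exact not_isUnit_zero (h0 ▸ hu)
  have hunits : #({a | IsUnit a} : Finset (ZMod n)) = n.totient := by
    rw [card_filter_isUnit, ZMod.card_units_eq_totient]
  have hcard : #({a | ¬ IsUnit a} : Finset (ZMod n)) = n - n.totient := by
    rw [filter_not, card_sdiff_of_subset (filter_subset _ _), card_univ, ZMod.card, hunits]
  rw [indepDomPoly_eq_sum, filter_isIndepDomSet_comaximalGraph, sum_insert hnonunits,
    sum_image fun _ _ _ _ => singleton_inj.1]
  simp only [card_singleton, pow_one, sum_const, hunits, hcard, nsmul_eq_mul, C_eq_natCast,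
    add_comm]

end ComaximalGraph

/-- For an odd prime `p` and `m ≥ 1`, the polynomial
`D_i(Γ(ℤ_{p^m}), x) = (p^m − p^(m−1))·x + x^(p^(m−1))` over `ℝ`
has exactly one real root, namely `x = 0`. -/
theorem stmt_9 (p m : ℕ) (hp : p.Prime) (hodd : Odd p) (hm : 1 ≤ m) :
    indepDomPoly (comaximalGraph (p ^ m)) =
      Polynomial.C ((p ^ m - p ^ (m - 1) : ℕ) : ℝ) * Polynomial.X +
        Polynomial.X ^ (p ^ (m - 1)) ∧
    ∀ x : ℝ, (indepDomPoly (comaximalGraph (p ^ m))).eval x = 0 ↔ x = 0 := by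
  have : NeZero (p ^ m) := ⟨pow_ne_zero m hp.ne_zero⟩
  have : IsLocalRing (ZMod (p ^ m)) := ZMod.isLocalRing_prime_pow hp (by omega)
  have htotient := Nat.totient_prime_pow_add_prime_pow_pred hp (by omega : m ≠ 0)
  have hformula : indepDomPoly (comaximalGraph (p ^ m)) =
      C ((p ^ m - p ^ (m - 1) : ℕ) : ℝ) * X + X ^ (p ^ (m - 1)) := by
    rw [indepDomPoly_comaximalGraph, show (p ^ m).totient = p ^ m - p ^ (m - 1) by omega,
      show p ^ m - (p ^ m - p ^ (m - 1)) = p ^ (m - 1) by omega]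
  have hcoeff : (0 : ℝ) < ((p ^ m - p ^ (m - 1) : ℕ) : ℝ) :=
    Nat.cast_pos.2 (Nat.sub_pos_of_lt (Nat.pow_lt_pow_right hp.one_lt (by omega)))
  refine ⟨hformula, fun x => ?_⟩
  simpa [hformula] using mul_add_pow_eq_zero_iff hcoeff hodd.pow x
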